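/- In the complexified Clifford algebra of ℝ^{2l} (with e_i² = -1), the supertrace of a basis monomial e_{i_1} e_{i_2} ⋯ e_{i_k} (i_1 < ⋯ < i_k) in the spinor representation vanishes unless k = 2l, and Str(e_1 e_2 ⋯ e_{2l}) = (-2i)^l (up to the standard sign convention); equivalently, Str(a) = (-2i)^l · T(σ(a)) where σ is the symbol map and T the Berezin integral. -/

import Mathlib

open scoped TensorProduct

/-!
The images `g i = 1 ⊗ e_i` anticommute and square to `-1`, so moving `g i` across a product of
generators indexed by a list `L` costs the sign `(-1) ^ (|L| + #{occurrences of i in L})`.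
For a strictly increasing monomial `e_f` of length `k < 2l`, choose `i` outside the range of `f`
when `k` is even and inside it when `k` is odd: then `g i` anticommutes with `Γ e_f`, and since
`ρ (g i)` is invertible and the trace is conjugation invariant, `tr ρ(Γ e_f) = -tr ρ(Γ e_f) = 0`.
For the top monomial, `Γ e_1 ⋯ e_{2l} = i^l (e_1 ⋯ e_{2l})² = i^l (-1)^(l(2l+1)) = (-i)^l` is a
scalar, whose trace on the `2^l`-dimensional spinor space is `(-2i)^l`.
-/

section AnticommutingFamily

variable {A ι : Type*} [Ring A] {g : ι → A}

theorem mul_prod_map_of_pairwise_anticomm [DecidableEq ι]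
    (hg : Pairwise fun i j => g i * g j = -(g j * g i)) (i : ι) (L : List ι) :
    g i * (L.map g).prod = (-1 : ℤ) ^ (L.length + L.count i) • ((L.map g).prod * g i) := by
  induction L with
  | nil => simp
  | cons j L ih =>
    simp only [List.map_cons, List.prod_cons, List.length_cons, List.count_cons, beq_iff_eq]
    by_cases hij : j = i
    · subst hij
      rw [if_pos rfl, show L.length + 1 + (L.count j + 1) = L.length + L.count j + 2 by ring,
        pow_add, neg_one_sq, mul_one]
      conv_lhs => rw [ih]
      rw [mul_smul_comm, mul_assoc]
    · rw [if_neg hij, add_zero, ← mul_assoc, hg (Ne.symm hij), neg_mul, mul_assoc, ih,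
        mul_smul_comm, add_right_comm, pow_succ, mul_neg_one, neg_smul, mul_assoc]

theorem mul_prod_map_eq_neg_of_odd [DecidableEq ι]
    (hg : Pairwise fun i j => g i * g j = -(g j * g i)) {i : ι} {L : List ι}
    (h : Odd (L.length + L.count i)) :
    g i * (L.map g).prod = -((L.map g).prod * g i) := by
  rw [mul_prod_map_of_pairwise_anticomm hg, h.neg_one_pow, neg_one_zsmul]

theorem prod_map_mul_self_of_nodup (hg : Pairwise fun i j => g i * g j = -(g j * g i))
    (hsq : ∀ i, g i * g i = -1) {L : List ι} (hL : L.Nodup) :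
    (L.map g).prod * (L.map g).prod = (-1 : A) ^ (L.length + 1).choose 2 := by
  classical
  induction L with
  | nil => simp
  | cons j L ih =>
    obtain ⟨hj, hL⟩ := List.nodup_cons.mp hL
    have hcomm : (L.map g).prod * g j = (-1 : ℤ) ^ L.length • (g j * (L.map g).prod) := by
      rw [mul_prod_map_of_pairwise_anticomm hg, List.count_eq_zero_of_not_mem hj, add_zero,
        smul_smul, ← pow_add, Even.neg_one_pow ⟨_, rfl⟩, one_smul]
    simp only [List.map_cons, List.prod_cons, List.length_cons]
    calc g j * (L.map g).prod * (g j * (L.map g).prod)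
        = g j * ((L.map g).prod * g j) * (L.map g).prod := by simp only [mul_assoc]
      _ = (-1 : ℤ) ^ L.length • (g j * g j * ((L.map g).prod * (L.map g).prod)) := by
        rw [hcomm, mul_smul_comm, smul_mul_assoc]; simp only [mul_assoc]
      _ = (-1 : A) ^ (L.length + 1 + 1).choose 2 := by
        rw [hsq, ih hL, zsmul_eq_mul, Nat.choose_succ_succ' (L.length + 1), Nat.choose_one_right,
          pow_add, pow_succ]
        push_cast
        simp only [mul_assoc]

end AnticommutingFamily

theorem neg_one_pow_two_mul_add_one_choose_two {R : Type*} [Monoid R] [HasDistribNeg R] (n : ℕ) :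
    (-1 : R) ^ (2 * n + 1).choose 2 = (-1) ^ n := by
  rw [Nat.choose_two_right, Nat.add_sub_cancel, mul_left_comm, Nat.mul_div_cancel_left _ two_pos,
    pow_mul, (odd_two_mul_add_one n).neg_one_pow]

theorem List.Nodup.exists_count_eq_length_mod_two {α : Type*} [Fintype α] [DecidableEq α]
    {L : List α} (hL : L.Nodup) (hlt : L.length < Fintype.card α) :
    ∃ a, L.count a = L.length % 2 := by
  rcases Nat.even_or_odd L.length with heven | hodd
  · obtain ⟨a, ha⟩ := Cardinal.exists_notMem_of_length_lt L
      (by rw [Cardinal.mk_fintype]; exact_mod_cast hlt)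
    exact ⟨a, by rw [List.count_eq_zero_of_not_mem ha, Nat.even_iff.mp heven]⟩
  · obtain ⟨a, ha⟩ := List.exists_mem_of_length_pos hodd.pos
    exact ⟨a, by rw [List.count_eq_one_of_mem hL ha, Nat.odd_iff.mp hodd]⟩

namespace LinearMap

variable {R M : Type*} [CommRing R] [AddCommGroup M] [Module R M]

theorem trace_eq_zero_of_isUnit_mul_eq_neg_mul [NoZeroDivisors R] [CharZero R]
    {u f : Module.End R M} (hu : IsUnit u) (h : u * f = -(f * u)) : trace R M f = 0 := by
  obtain ⟨u, rfl⟩ := hu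
  have hconj : (u : Module.End R M) * f * ↑u⁻¹ = -f := by
    rw [h, neg_mul, mul_assoc, Units.mul_inv, mul_one]
  rw [← CharZero.eq_neg_self_iff, ← map_neg, ← hconj, trace_conj]

theorem trace_neg_one_pow [Module.Free R M] [Module.Finite R M] (n : ℕ) :
    trace R M ((-1) ^ n) = (-1) ^ n * Module.finrank R M := by
  rw [← neg_one_smul R (1 : Module.End R M), smul_pow, one_pow, map_smul, trace_one, smul_eq_mul]

theorem trace_map_prod_finRange_mul_prod_eq_zero [NoZeroDivisors R] [CharZero R] {A F : Type*}
    [Ring A] [FunLike F A (Module.End R M)] [RingHomClass F A (Module.End R M)] (ρ : F)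
    {n : ℕ} {g : Fin n → A} (hg : Pairwise fun i j => g i * g j = -(g j * g i))
    (hsq : ∀ i, g i * g i = -1)
    (hn : Even n) {L : List (Fin n)} (hL : L.Nodup) (hlt : L.length < n) :
    trace R M (ρ (((List.finRange n).map g).prod * (L.map g).prod)) = 0 := by
  obtain ⟨i, hi⟩ := hL.exists_count_eq_length_mod_two (by simpa using hlt)
  have hodd : Odd ((List.finRange n ++ L).length + (List.finRange n ++ L).count i) := by
    rw [List.length_append, List.count_append, List.count_finRange, hi, List.length_finRange,
      Nat.odd_iff]
    have := Nat.even_iff.mp hn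
    omega
  have hunit : IsUnit (g i) :=
    (Units.mk (g i) (-g i) (by rw [mul_neg, hsq, neg_neg]) (by rw [neg_mul, hsq, neg_neg])).isUnit
  refine trace_eq_zero_of_isUnit_mul_eq_neg_mul (hunit.map ρ) ?_
  rw [← map_mul, ← map_mul, ← map_neg, ← List.prod_append, ← List.map_append,
    mul_prod_map_eq_neg_of_odd hg hodd]

end LinearMap

section CliffordAlgebra

open CliffordAlgebra Algebra.TensorProduct

variable {R A M : Type*} [CommRing R] [Ring A] [Algebra R A] [AddCommGroup M] [Module R M]
  {Q : QuadraticForm R M}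

theorem includeRight_ι_mul_self_of_eq_neg_one {v : M} (hv : Q v = -1) :
    (includeRight (ι Q v) : A ⊗[R] CliffordAlgebra Q) * includeRight (ι Q v) = -1 := by
  rw [← map_mul, ι_sq_scalar, hv, map_neg, map_one, map_neg, map_one]

theorem includeRight_ι_mul_ι_comm_of_polar_eq_zero {v w : M} (h : QuadraticMap.polar Q v w = 0) :
    (includeRight (ι Q v) : A ⊗[R] CliffordAlgebra Q) * includeRight (ι Q w)
      = -(includeRight (ι Q w) * includeRight (ι Q v)) := by
  rw [← map_mul includeRight, ← map_mul includeRight, ← map_neg includeRight,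
    ι_mul_ι_comm_of_isOrtho (QuadraticMap.isOrtho_polarBilin.mp h)]

end CliffordAlgebra

theorem spinor_supertrace_monomials_general
    {V : Type*} [AddCommGroup V] [Module ℝ V]
    (Q : QuadraticForm ℝ V) (l : ℕ)
    (e : Fin (2 * l) → V)
    (hQ : ∀ i, Q (e i) = -1)
    (hpolar : ∀ i j, i ≠ j → QuadraticMap.polar Q (e i) (e j) = 0)
    -- the spinor module `S`, of dimension `2^l`, and the spinor representation `ρ`:
    (S : Type*) [AddCommGroup S] [Module ℂ S] [FiniteDimensional ℂ S]
    (hS : Module.finrank ℂ S = 2 ^ l)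
    (ρ : (ℂ ⊗[ℝ] CliffordAlgebra Q) ≃ₐ[ℂ] Module.End ℂ S)
    -- the chirality element and the supertrace:
    (Γ : ℂ ⊗[ℝ] CliffordAlgebra Q)
    (hΓ : Γ = (Complex.I ^ l) •
      ((1 : ℂ) ⊗ₜ[ℝ] (List.ofFn fun i => CliffordAlgebra.ι Q (e i)).prod))
    (Str : (ℂ ⊗[ℝ] CliffordAlgebra Q) → ℂ)
    (hStr : ∀ a, Str a = LinearMap.trace ℂ S (ρ (Γ * a))) :
    -- the supertrace of a strictly increasing monomial of length `k < 2l` vanishes: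
    (∀ (k : ℕ) (f : Fin k → Fin (2 * l)), StrictMono f → k < 2 * l →
      Str ((1 : ℂ) ⊗ₜ[ℝ] (List.ofFn fun j => CliffordAlgebra.ι Q (e (f j))).prod) = 0) ∧
    -- while the top monomial has supertrace `(-2i)^l`:
    Str ((1 : ℂ) ⊗ₜ[ℝ] (List.ofFn fun i => CliffordAlgebra.ι Q (e i)).prod)
      = (-2 * Complex.I) ^ l := by
  set g : Fin (2 * l) → ℂ ⊗[ℝ] CliffordAlgebra Q :=
    fun i => Algebra.TensorProduct.includeRight (CliffordAlgebra.ι Q (e i))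
  have hsq : ∀ i, g i * g i = -1 := fun i => includeRight_ι_mul_self_of_eq_neg_one (hQ i)
  have hanti : Pairwise fun i j => g i * g j = -(g j * g i) := fun i j hij =>
    includeRight_ι_mul_ι_comm_of_polar_eq_zero (hpolar i j hij)
  have hmonomial : ∀ {k} (f : Fin k → Fin (2 * l)),
      (1 : ℂ) ⊗ₜ[ℝ] (List.ofFn fun j => CliffordAlgebra.ι Q (e (f j))).prod
        = ((List.ofFn f).map g).prod := fun f => by
    rw [← Algebra.TensorProduct.includeRight_apply, map_list_prod, List.map_ofFn, List.map_ofFn]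
    rfl
  have htop : (1 : ℂ) ⊗ₜ[ℝ] (List.ofFn fun i => CliffordAlgebra.ι Q (e i)).prod
      = ((List.finRange (2 * l)).map g).prod := by
    rw [← List.ofFn_id]; exact hmonomial id
  rw [htop] at hΓ
  refine ⟨fun k f hf hk => ?_, ?_⟩
  · rw [hStr, hΓ, hmonomial, smul_mul_assoc, map_smul, map_smul,
      LinearMap.trace_map_prod_finRange_mul_prod_eq_zero ρ hanti hsq (even_two_mul l)
        (List.nodup_ofFn.mpr hf.injective) (by simpa using hk), smul_zero]
  · rw [hStr, hΓ, htop, smul_mul_assoc,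
      prod_map_mul_self_of_nodup hanti hsq (List.nodup_finRange _), List.length_finRange,
      neg_one_pow_two_mul_add_one_choose_two (R := ℂ ⊗[ℝ] CliffordAlgebra Q), map_smul, map_smul,
      map_pow, map_neg, map_one, LinearMap.trace_neg_one_pow, hS, smul_eq_mul, Nat.cast_pow,
      Nat.cast_ofNat, ← mul_assoc, ← mul_pow, ← mul_pow]
    ring

/-- Realize the complexified Clifford algebra `Cl(ℝ^{2l}) ⊗ ℂ`
(generators `e_i` with `e_i² = -1`, `e_i e_j = -e_j e_i`) as the endomorphism algebra
of the `2^l`-dimensional spinor space `S` via an algebra isomorphism `ρ`, and let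
`Γ = i^l e_1 ⋯ e_{2l}` be the chirality element, `Str(a) = tr(Γ a)` the supertrace.
Then the supertrace of a strictly increasing basis monomial `e_{i_1} ⋯ e_{i_k}`
vanishes unless `k = 2l`, and `Str(e_1 e_2 ⋯ e_{2l}) = (-2i)^l`. -/
theorem spinor_supertrace_monomials
    {V : Type*} [AddCommGroup V] [Module ℝ V] [FiniteDimensional ℝ V]
    (Q : QuadraticForm ℝ V) (l : ℕ)
    (hdim : Module.finrank ℝ V = 2 * l)
    (e : Fin (2 * l) → V)
    (hQ : ∀ i, Q (e i) = -1)
    (hpolar : ∀ i j, i ≠ j → QuadraticMap.polar Q (e i) (e j) = 0)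
    (hspan : Submodule.span ℝ (Set.range e) = ⊤)
    -- the spinor module `S`, of dimension `2^l`, and the spinor representation `ρ`:
    (S : Type*) [AddCommGroup S] [Module ℂ S] [FiniteDimensional ℂ S]
    (hS : Module.finrank ℂ S = 2 ^ l)
    (ρ : (ℂ ⊗[ℝ] CliffordAlgebra Q) ≃ₐ[ℂ] Module.End ℂ S)
    -- the chirality element and the supertrace:
    (Γ : ℂ ⊗[ℝ] CliffordAlgebra Q)
    (hΓ : Γ = (Complex.I ^ l) •
      ((1 : ℂ) ⊗ₜ[ℝ] (List.ofFn fun i => CliffordAlgebra.ι Q (e i)).prod))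
    (Str : (ℂ ⊗[ℝ] CliffordAlgebra Q) → ℂ)
    (hStr : ∀ a, Str a = LinearMap.trace ℂ S (ρ (Γ * a))) :
    -- the supertrace of a strictly increasing monomial of length `k < 2l` vanishes:
    (∀ (k : ℕ) (f : Fin k → Fin (2 * l)), StrictMono f → k < 2 * l →
      Str ((1 : ℂ) ⊗ₜ[ℝ] (List.ofFn fun j => CliffordAlgebra.ι Q (e (f j))).prod) = 0) ∧
    -- while the top monomial has supertrace `(-2i)^l`:
    Str ((1 : ℂ) ⊗ₜ[ℝ] (List.ofFn fun i => CliffordAlgebra.ι Q (e i)).prod)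
      = (-2 * Complex.I) ^ l :=
  spinor_supertrace_monomials_general Q l e hQ hpolar S hS ρ Γ hΓ Str hStr
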